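/- Let G be a unimodular locally compact group with Haar measure μ acting continuously and cocompactly on a locally finite simplicial complex X with compact open simplex stabilizers. For 0 ≤ l < k and a G-invariant function f(τ,σ) on pairs of an ordered l-simplex τ contained in an ordered k-simplex σ, one has Σ_{σ ∈ Σ(k,G)} Σ_{τ ⊂ σ} f(τ,σ)/μ(G_σ) = Σ_{τ ∈ Σ(l,G)} Σ_{σ ⊃ τ} f(τ,σ)/μ(G_τ). -/

import Mathlib

/-- An abstract simplicial complex on a vertex type `V`. -/
structure SComplex (V : Type*) where
  faces : Set (Finset V)
  not_empty_mem : ∅ ∉ faces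
  down_closed : ∀ s ∈ faces, ∀ t, t ⊆ s → t ≠ ∅ → t ∈ faces

namespace SComplex

variable {V : Type*} (X : SComplex V)

/-- Local finiteness: every vertex lies in only finitely many faces. -/
def LocallyFinite : Prop := ∀ v : V, {s ∈ X.faces | v ∈ s}.Finite

/-- The group of simplicial automorphisms, as a subgroup of `Equiv.Perm V`. -/
def aut : Subgroup (Equiv.Perm V) where
  carrier := {g | ∀ s : Finset V, s ∈ X.faces ↔ s.map g.toEmbedding ∈ X.faces}
  one_mem' := by
    intro s
    have : (1 : Equiv.Perm V).toEmbedding = Function.Embedding.refl V := by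
      ext v; rfl
    rw [this, Finset.map_refl]
  mul_mem' := by
    intro a b ha hb s
    rw [hb s, ha (s.map b.toEmbedding), Finset.map_map]
    rfl
  inv_mem' := by
    intro a ha s
    have h := ha (s.map (a⁻¹ : Equiv.Perm V).toEmbedding)
    rw [Finset.map_map] at h
    have : ((a⁻¹ : Equiv.Perm V).toEmbedding.trans a.toEmbedding) =
        Function.Embedding.refl V := by
      ext v; simp
    rw [this, Finset.map_refl] at h
    exact h.symm

/-- The compact-open topology on `Equiv.Perm V` for a discrete vertex set:
the topology induced by pointwise convergence of a permutation and its inverse. -/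
def permTop (V : Type*) : TopologicalSpace (Equiv.Perm V) :=
  letI : TopologicalSpace V := ⊥
  TopologicalSpace.induced
    (fun g : Equiv.Perm V => ((g : V → V), ((g.symm : V → V)))) inferInstance

scoped instance instPermTop (V : Type*) : TopologicalSpace (Equiv.Perm V) := permTop V

/-- `K` is (the vertex set of) a finite subcomplex of `X`. -/
def IsFiniteSubcomplexVerts (K : Finset V) : Prop := ∀ v ∈ K, ({v} : Finset V) ∈ X.faces

/-- The pointwise stabilizer of a finite set of vertices in a subgroup `G ≤ Equiv.Perm V`. -/
def pointStab (G : Subgroup (Equiv.Perm V)) (K : Finset V) : Set G :=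
  {g : G | ∀ v ∈ K, (g : Equiv.Perm V) v = v}

end SComplex

section OrderedSimplices

variable {V : Type*} [DecidableEq V] (X : SComplex V)

/-- Ordered `k`-simplices of `X`: injective `(k+1)`-tuples of vertices spanning a face. -/
def SComplex.osimp (k : ℕ) : Type _ :=
  {s : Fin (k + 1) → V // Function.Injective s ∧ Finset.univ.image s ∈ X.faces}

variable {G : Type*} [Group G]

/-- The action of `g ∈ G` on ordered `k`-simplices, for an action `act` of `G` on `X`
by simplicial automorphisms. -/
def SComplex.gAct (act : G →* Equiv.Perm V) (hact : ∀ g : G, act g ∈ X.aut)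
    {k : ℕ} (g : G) (σ : X.osimp k) : X.osimp k :=
  ⟨fun i => act g (σ.1 i), by
    refine ⟨(act g).injective.comp σ.2.1, ?_⟩
    have h := ((hact g) (Finset.univ.image σ.1)).mp σ.2.2
    rw [Finset.map_eq_image] at h
    rw [Finset.image_image] at h
    convert h using 2
    rfl⟩

/-- `τ` is a face of `σ`: the vertices of `τ` are among the vertices of `σ`. -/
def SComplex.OSub {l k : ℕ} (τ : X.osimp l) (σ : X.osimp k) : Prop :=
  Set.range τ.1 ⊆ Set.range σ.1

/-- `R` is a set of representatives of the `G`-orbits on ordered `k`-simplices. -/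
def SComplex.IsOrbitReps (act : G →* Equiv.Perm V) (hact : ∀ g : G, act g ∈ X.aut)
    {k : ℕ} (R : Finset (X.osimp k)) : Prop :=
  ∀ σ : X.osimp k, ∃! σ' : X.osimp k, σ' ∈ R ∧ ∃ g : G, X.gAct act hact g σ' = σ

end OrderedSimplices


/-!
Weight a pair of incidences `τ₀ ⊆ σ₀`, `τ ⊆ σ` by the Haar measure `w` of
`{g | g • τ₀ = τ ∧ g • σ₀ = σ}`; invariance of `f` gives `f τ σ * w = f τ₀ σ₀ * w`.
For fixed `τ ⊆ σ`, these sets (over `σ₀ ⊇ τ₀`) partition the transporter `{g | g • τ₀ = τ}`,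
a left coset of `G_τ₀`, so the weights `w / μ(G_τ₀)` summed over `τ₀ ∈ Σ(l,G)` and `σ₀ ⊇ τ₀`
add up to `1`. For fixed `τ₀ ⊆ σ₀` they partition `{g | g • σ₀ = σ}`, a right coset of `G_σ`,
which has measure `μ(G_σ)` by unimodularity, so the weights `w / μ(G_σ)` summed over
`σ ∈ Σ(k,G)` and `τ ⊆ σ` add up to `1` as well. Inserting these two partitions of unity turns
both sides into the same quadruple sum.
-/

open MeasureTheory MulAction
open scoped ENNReal

theorem Finset.sum_sum_univ_comm {ι κ M : Type*} [AddCommMonoid M] {P : ι → Type*} {Q : κ → Type*}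
    [∀ i, Fintype (P i)] [∀ k, Fintype (Q k)] (s : Finset ι) (t : Finset κ)
    (F : (i : ι) → P i → (k : κ) → Q k → M) :
    ∑ i ∈ s, ∑ p, ∑ k ∈ t, ∑ q, F i p k q = ∑ k ∈ t, ∑ q, ∑ i ∈ s, ∑ p, F i p k q :=
  calc _ = ∑ i ∈ s, ∑ k ∈ t, ∑ p, ∑ q, F i p k q := sum_congr rfl fun _ _ => sum_comm
    _ = ∑ k ∈ t, ∑ i ∈ s, ∑ p, ∑ q, F i p k q := sum_comm
    _ = _ := sum_congr rfl fun _ _ => (sum_congr rfl fun _ _ => sum_comm).trans sum_comm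

namespace MulAction

variable {G α β : Type*} [Group G] [MulAction G α] [MulAction G β]

theorem setOf_smul_eq_eq_preimage_mul_left {g₀ : G} {a b : α} (h : g₀ • a = b) :
    {g : G | g • a = b} = (g₀⁻¹ * ·) ⁻¹' stabilizer G a := by
  ext g
  simp [mem_stabilizer_iff, mul_smul, ← h, inv_smul_eq_iff]

theorem setOf_smul_eq_eq_preimage_mul_right {g₀ : G} {a b : α} (h : g₀ • a = b) :
    {g : G | g • a = b} = (· * g₀⁻¹) ⁻¹' stabilizer G b := by
  ext g
  simp [mem_stabilizer_iff, mul_smul, ← h]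

section Measure

variable [MeasurableSpace G] (μ : Measure G)

theorem mul_toReal_measure_setOf_smul_eq_and {f : α → β → ℝ}
    (hf : ∀ (g : G) a b, f (g • a) (g • b) = f a b) (a₀ a : α) (b₀ b : β) :
    f a b * (μ {g : G | g • a₀ = a ∧ g • b₀ = b}).toReal =
      f a₀ b₀ * (μ {g : G | g • a₀ = a ∧ g • b₀ = b}).toReal := by
  rcases Set.eq_empty_or_nonempty {g : G | g • a₀ = a ∧ g • b₀ = b} with h | ⟨g, rfl, rfl⟩
  · simp [h]
  · rw [hf]

variable [MeasurableMul G]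

theorem measurableSet_setOf_smul_eq {a : α} (ha : MeasurableSet (stabilizer G a : Set G))
    (b : α) : MeasurableSet {g : G | g • a = b} := by
  by_cases h : ∃ g₀ : G, g₀ • a = b
  · obtain ⟨g₀, h⟩ := h
    rw [setOf_smul_eq_eq_preimage_mul_left h]
    exact measurable_const_mul _ ha
  · convert MeasurableSet.empty
    exact Set.eq_empty_of_forall_notMem fun g hg => h ⟨g, hg⟩

theorem measure_setOf_smul_eq_left [μ.IsMulLeftInvariant] {g₀ : G} {a b : α}
    (h : g₀ • a = b) : μ {g : G | g • a = b} = μ (stabilizer G a) := by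
  rw [setOf_smul_eq_eq_preimage_mul_left h, measure_preimage_mul]

theorem measure_setOf_smul_eq_right [μ.IsMulRightInvariant] {g₀ : G} {a b : α}
    (h : g₀ • a = b) : μ {g : G | g • a = b} = μ (stabilizer G b) := by
  rw [setOf_smul_eq_eq_preimage_mul_right h, measure_preimage_mul_right]

variable {r : α → β → Prop}

theorem sum_measure_setOf_smul_eq_and_left
    (hr : ∀ (g : G) a b, r a b → r (g • a) (g • b)) {a₀ a : α} {b : β} (hab : r a b)
    (ha₀ : MeasurableSet (stabilizer G a₀ : Set G))
    (hβ : ∀ b₀ : β, MeasurableSet (stabilizer G b₀ : Set G)) [Fintype {b₀ // r a₀ b₀}] :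
    ∑ b₀ : {b₀ // r a₀ b₀}, μ {g : G | g • a₀ = a ∧ g • b₀.1 = b} =
      μ {g : G | g • a₀ = a} := by
  rw [← measure_biUnion_finset]
  · congr 1
    ext g
    simp only [Set.mem_iUnion, Set.mem_ofPred_eq, Finset.mem_univ, exists_const,
      Subtype.exists, exists_and_left, exists_prop, and_iff_left_iff_imp]
    rintro rfl
    refine ⟨g⁻¹ • b, ?_, smul_inv_smul g b⟩
    simpa using hr g⁻¹ _ _ hab
  · intro b₁ _ b₂ _ hne
    refine Set.disjoint_left.mpr fun g hg₁ hg₂ => hne (Subtype.ext ?_)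
    exact smul_left_cancel g (hg₁.2.trans hg₂.2.symm)
  · exact fun b₀ _ =>
      (measurableSet_setOf_smul_eq ha₀ a).inter (measurableSet_setOf_smul_eq (hβ b₀) b)

theorem sum_measure_setOf_smul_eq_and_right
    (hr : ∀ (g : G) a b, r a b → r (g • a) (g • b)) {a₀ : α} {b₀ b : β} (hab₀ : r a₀ b₀)
    (ha₀ : MeasurableSet (stabilizer G a₀ : Set G))
    (hb₀ : MeasurableSet (stabilizer G b₀ : Set G)) [Fintype {a // r a b}] :
    ∑ a : {a // r a b}, μ {g : G | g • a₀ = a.1 ∧ g • b₀ = b} =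
      μ {g : G | g • b₀ = b} := by
  rw [← measure_biUnion_finset]
  · congr 1
    ext g
    simp only [Set.mem_iUnion, Set.mem_ofPred_eq, Finset.mem_univ, exists_const,
      Subtype.exists, exists_and_left, exists_prop]
    refine ⟨fun ⟨_, _, _, hg⟩ => hg, fun hg => ⟨g • a₀, rfl, ?_, hg⟩⟩
    exact hg ▸ hr g _ _ hab₀
  · intro a₁ _ a₂ _ hne
    refine Set.disjoint_left.mpr fun g hg₁ hg₂ => hne (Subtype.ext ?_)
    exact hg₁.1.symm.trans hg₂.1
  · exact fun a _ =>
      (measurableSet_setOf_smul_eq ha₀ a).inter (measurableSet_setOf_smul_eq hb₀ b)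

theorem sum_orbitReps_sum_toReal_measure_div_left [μ.IsMulLeftInvariant]
    (hr : ∀ (g : G) a b, r a b → r (g • a) (g • b))
    (hα : ∀ a : α, MeasurableSet (stabilizer G a : Set G) ∧
      μ (stabilizer G a) ≠ 0 ∧ μ (stabilizer G a) ≠ ∞)
    (hβ : ∀ b : β, MeasurableSet (stabilizer G b : Set G)) [∀ a₀, Fintype {b₀ // r a₀ b₀}]
    {Rα : Finset α} (hRα : ∀ a, ∃! a₀, a₀ ∈ Rα ∧ ∃ g : G, g • a₀ = a)
    {a : α} {b : β} (hab : r a b) :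
    ∑ a₀ ∈ Rα, ∑ b₀ : {b₀ // r a₀ b₀},
      (μ {g : G | g • a₀ = a ∧ g • b₀.1 = b}).toReal / (μ (stabilizer G a₀)).toReal = 1 := by
  obtain ⟨a₁, ⟨ha₁, g₁, hg₁⟩, huniq⟩ := hRα a
  rw [Finset.sum_eq_single_of_mem a₁ ha₁]
  · obtain ⟨hmeas, hpos, hfin⟩ := hα a₁
    have hsum := sum_measure_setOf_smul_eq_and_left μ hr hab hmeas hβ
    rw [measure_setOf_smul_eq_left μ hg₁] at hsum
    rw [← Finset.sum_div, ← ENNReal.toReal_sum, hsum,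
      div_self (ENNReal.toReal_ne_zero.2 ⟨hpos, hfin⟩)]
    exact ENNReal.sum_ne_top.1 (hsum ▸ hfin)
  · refine fun a₀ ha₀ hne => Finset.sum_eq_zero fun b₀ _ => ?_
    rw [Set.eq_empty_of_forall_notMem (s := {g : G | g • a₀ = a ∧ g • b₀.1 = b})
      fun g hg => hne (huniq a₀ ⟨ha₀, g, hg.1⟩)]
    simp

theorem sum_orbitReps_sum_toReal_measure_div_right [μ.IsMulRightInvariant]
    (hr : ∀ (g : G) a b, r a b → r (g • a) (g • b))
    (hβ : ∀ b : β, MeasurableSet (stabilizer G b : Set G) ∧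
      μ (stabilizer G b) ≠ 0 ∧ μ (stabilizer G b) ≠ ∞) [∀ b, Fintype {a // r a b}]
    {Rβ : Finset β} (hRβ : ∀ b, ∃! b₀, b₀ ∈ Rβ ∧ ∃ g : G, g • b₀ = b)
    {a₀ : α} {b₀ : β} (hab₀ : r a₀ b₀) (ha₀ : MeasurableSet (stabilizer G a₀ : Set G)) :
    ∑ b ∈ Rβ, ∑ a : {a // r a b},
      (μ {g : G | g • a₀ = a.1 ∧ g • b₀ = b}).toReal / (μ (stabilizer G b)).toReal = 1 := by
  obtain ⟨b₁, ⟨hb₁, g₁, hg₁⟩, huniq⟩ := hRβ b₀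
  rw [Finset.sum_eq_single_of_mem b₁ hb₁]
  · obtain ⟨hmeas, hpos, hfin⟩ := hβ b₁
    have hsum := sum_measure_setOf_smul_eq_and_right μ hr hab₀ ha₀ (hβ b₀).1 (b := b₁)
    rw [measure_setOf_smul_eq_right μ (inv_smul_eq_iff.2 hg₁.symm)] at hsum
    rw [← Finset.sum_div, ← ENNReal.toReal_sum, hsum,
      div_self (ENNReal.toReal_ne_zero.2 ⟨hpos, hfin⟩)]
    exact ENNReal.sum_ne_top.1 (hsum ▸ hfin)
  · refine fun b hb hne => Finset.sum_eq_zero fun a _ => ?_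
    rw [Set.eq_empty_of_forall_notMem (s := {g : G | g • a₀ = a.1 ∧ g • b₀ = b}) fun g hg =>
      hne (huniq b ⟨hb, g⁻¹, inv_smul_eq_iff.2 hg.2.symm⟩)]
    simp

theorem sum_orbitReps_tsum_div_measure_stabilizer_eq [μ.IsMulLeftInvariant]
    [μ.IsMulRightInvariant] (hr : ∀ (g : G) a b, r a b → r (g • a) (g • b))
    [∀ b, Finite {a // r a b}] [∀ a, Finite {b // r a b}]
    (hα : ∀ a : α, MeasurableSet (stabilizer G a : Set G) ∧
      μ (stabilizer G a) ≠ 0 ∧ μ (stabilizer G a) ≠ ∞)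
    (hβ : ∀ b : β, MeasurableSet (stabilizer G b : Set G) ∧
      μ (stabilizer G b) ≠ 0 ∧ μ (stabilizer G b) ≠ ∞)
    {f : α → β → ℝ} (hf : ∀ (g : G) a b, f (g • a) (g • b) = f a b)
    {Rα : Finset α} (hRα : ∀ a, ∃! a₀, a₀ ∈ Rα ∧ ∃ g : G, g • a₀ = a)
    {Rβ : Finset β} (hRβ : ∀ b, ∃! b₀, b₀ ∈ Rβ ∧ ∃ g : G, g • b₀ = b) :
    ∑ b ∈ Rβ, ∑' a : {a // r a b}, f a b / (μ (stabilizer G b)).toReal =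
      ∑ a ∈ Rα, ∑' b : {b // r a b}, f a b / (μ (stabilizer G a)).toReal := by
  let _ (b : β) : Fintype {a // r a b} := Fintype.ofFinite _
  let _ (a : α) : Fintype {b // r a b} := Fintype.ofFinite _
  simp only [tsum_fintype]
  let F (b : β) (a : α) (a₀ : α) (b₀ : β) : ℝ := f a₀ b₀ *
    (μ {g : G | g • a₀ = a ∧ g • b₀ = b}).toReal /
      ((μ (stabilizer G b)).toReal * (μ (stabilizer G a₀)).toReal)
  have expand_left (b : β) (a : {a // r a b}) :
      f a b / (μ (stabilizer G b)).toReal = ∑ a₀ ∈ Rα, ∑ b₀ : {b₀ // r a₀ b₀}, F b a a₀ b₀ := by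
    rw [← mul_one (f a b / _), ← sum_orbitReps_sum_toReal_measure_div_left μ hr hα
      (fun b => (hβ b).1) hRα a.2, Finset.mul_sum]
    refine Finset.sum_congr rfl fun a₀ _ => ?_
    rw [Finset.mul_sum]
    refine Finset.sum_congr rfl fun b₀ _ => ?_
    rw [div_mul_div_comm, mul_toReal_measure_setOf_smul_eq_and μ hf]
  have expand_right (a₀ : α) (b₀ : {b₀ // r a₀ b₀}) :
      f a₀ b₀ / (μ (stabilizer G a₀)).toReal = ∑ b ∈ Rβ, ∑ a : {a // r a b}, F b a a₀ b₀ := by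
    rw [← mul_one (f a₀ b₀ / _), ← sum_orbitReps_sum_toReal_measure_div_right μ hr hβ hRβ
      b₀.2 (hα a₀).1, Finset.mul_sum]
    refine Finset.sum_congr rfl fun b _ => ?_
    rw [Finset.mul_sum]
    refine Finset.sum_congr rfl fun a _ => ?_
    rw [div_mul_div_comm, mul_comm (μ (stabilizer G a₀)).toReal]
  calc ∑ b ∈ Rβ, ∑ a : {a // r a b}, f a b / (μ (stabilizer G b)).toReal
      = ∑ b ∈ Rβ, ∑ a : {a // r a b}, ∑ a₀ ∈ Rα, ∑ b₀ : {b₀ // r a₀ b₀}, F b a a₀ b₀ :=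
        Finset.sum_congr rfl fun b _ => Finset.sum_congr rfl fun a _ => expand_left b a
    _ = ∑ a₀ ∈ Rα, ∑ b₀ : {b₀ // r a₀ b₀}, ∑ b ∈ Rβ, ∑ a : {a // r a b}, F b a a₀ b₀ :=
        Finset.sum_sum_univ_comm _ _ _
    _ = ∑ a₀ ∈ Rα, ∑ b₀ : {b₀ // r a₀ b₀}, f a₀ b₀ / (μ (stabilizer G a₀)).toReal :=
        Finset.sum_congr rfl fun a₀ _ => Finset.sum_congr rfl fun b₀ _ => (expand_right a₀ b₀).symm

end Measure

end MulAction

namespace SComplex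

variable {V : Type*} [DecidableEq V] {X : SComplex V}
  {G : Type*} [Group G] (act : G →* Equiv.Perm V) (hact : ∀ g : G, act g ∈ X.aut)

abbrev osimpMulAction (m : ℕ) : MulAction G (X.osimp m) where
  smul := X.gAct act hact
  one_smul σ := Subtype.ext <| funext fun i => show act 1 (σ.1 i) = σ.1 i by simp
  mul_smul g h σ := Subtype.ext <| funext fun i =>
    show act (g * h) (σ.1 i) = act g (act h (σ.1 i)) by simp

theorem OSub.gAct {l k : ℕ} {τ : X.osimp l} {σ : X.osimp k} (h : X.OSub τ σ) (g : G) :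
    X.OSub (X.gAct act hact g τ) (X.gAct act hact g σ) := by
  change Set.range (act g ∘ τ.1) ⊆ Set.range (act g ∘ σ.1)
  rw [Set.range_comp, Set.range_comp]
  exact Set.image_mono h

theorem finite_of_range_subset {m : ℕ} {S : Set V} (hS : S.Finite) (P : X.osimp m → Prop)
    (hP : ∀ σ, P σ → Set.range σ.1 ⊆ S) : Finite {σ // P σ} := by
  have := hS.to_subtype
  refine Finite.of_injective (fun σ i => (⟨σ.1.1 i, hP σ.1 σ.2 ⟨i, rfl⟩⟩ : S)) fun σ σ' h => ?_
  exact Subtype.ext (Subtype.ext (funext fun i => congrArg Subtype.val (congrFun h i)))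

theorem finite_osub_faces {l k : ℕ} (σ : X.osimp k) : Finite {τ : X.osimp l // X.OSub τ σ} :=
  finite_of_range_subset (Set.finite_range σ.1) _ fun _ h => h

theorem finite_osub_cofaces (hlf : X.LocallyFinite) {l k : ℕ} (τ : X.osimp l) :
    Finite {σ : X.osimp k // X.OSub τ σ} := by
  refine finite_of_range_subset ((hlf (τ.1 0)).biUnion fun s _ => s.finite_toSet) _ ?_
  rintro σ hτσ _ ⟨i, rfl⟩
  obtain ⟨j, hj⟩ := hτσ ⟨0, rfl⟩
  exact Set.mem_biUnion (x := Finset.univ.image σ.1) ⟨σ.2.2, Finset.mem_image.2 ⟨j, by simp, hj⟩⟩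
    (by simp)

end SComplex

open SComplex MeasureTheory in
theorem double_counting_haar_general {V : Type*} [DecidableEq V] (X : SComplex V)
    (hlf : X.LocallyFinite)
    {G : Type*} [Group G] [TopologicalSpace G] [IsTopologicalGroup G]
    [MeasurableSpace G] [BorelSpace G]
    (μ : Measure G) [μ.IsHaarMeasure] [μ.IsMulRightInvariant]
    (act : G →* Equiv.Perm V) (hact : ∀ g : G, act g ∈ X.aut)
    (hstab : ∀ (k : ℕ) (σ : X.osimp k),
      IsCompact {g : G | X.gAct act hact g σ = σ} ∧ IsOpen {g : G | X.gAct act hact g σ = σ})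
    (l k : ℕ)
    (f : X.osimp l → X.osimp k → ℝ)
    (hinv : ∀ (g : G) (τ : X.osimp l) (σ : X.osimp k),
      f (X.gAct act hact g τ) (X.gAct act hact g σ) = f τ σ)
    (Rk : Finset (X.osimp k)) (hRk : X.IsOrbitReps act hact Rk)
    (Rl : Finset (X.osimp l)) (hRl : X.IsOrbitReps act hact Rl) :
    ∑ σ ∈ Rk, ∑' τ : {τ : X.osimp l // X.OSub τ σ},
        f τ.1 σ / (μ {g : G | X.gAct act hact g σ = σ}).toReal =
      ∑ τ ∈ Rl, ∑' σ : {σ : X.osimp k // X.OSub τ σ},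
        f τ σ.1 / (μ {g : G | X.gAct act hact g τ = τ}).toReal := by
  let _ (m : ℕ) : MulAction G (X.osimp m) := osimpMulAction act hact m
  have (σ : X.osimp k) : Finite {τ : X.osimp l // X.OSub τ σ} := finite_osub_faces σ
  have (τ : X.osimp l) : Finite {σ : X.osimp k // X.OSub τ σ} := finite_osub_cofaces hlf τ
  have hstab_measure (m : ℕ) (σ : X.osimp m) : MeasurableSet (stabilizer G σ : Set G) ∧
      μ (stabilizer G σ) ≠ 0 ∧ μ (stabilizer G σ) ≠ ⊤ :=
    ⟨(hstab m σ).2.measurableSet, (hstab m σ).2.measure_ne_zero μ ⟨1, one_smul G σ⟩,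
      (hstab m σ).1.measure_ne_top⟩
  exact sum_orbitReps_tsum_div_measure_stabilizer_eq μ (fun g _ _ h => h.gAct act hact g)
    (hstab_measure l) (hstab_measure k) hinv hRl hRk

open SComplex MeasureTheory in
/-- Haar-measure double-counting (Lemma 3.3): for a unimodular locally compact group
`G` acting continuously and cocompactly on a locally finite simplicial complex with
compact open simplex stabilizers, and a `G`-invariant function `f(τ,σ)` on pairs of
an ordered `l`-simplex contained in an ordered `k`-simplex,
`Σ_{σ ∈ Σ(k,G)} Σ_{τ ⊂ σ} f(τ,σ)/μ(G_σ) = Σ_{τ ∈ Σ(l,G)} Σ_{σ ⊃ τ} f(τ,σ)/μ(G_τ)`. -/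
theorem double_counting_haar {V : Type*} [DecidableEq V] (X : SComplex V)
    (hlf : X.LocallyFinite)
    {G : Type*} [Group G] [TopologicalSpace G] [IsTopologicalGroup G] [T2Space G]
    [LocallyCompactSpace G] [MeasurableSpace G] [BorelSpace G]
    (μ : Measure G) [μ.IsHaarMeasure] [μ.IsMulRightInvariant]
    (act : G →* Equiv.Perm V) (hact : ∀ g : G, act g ∈ X.aut)
    (hcont : ∀ v : V, IsOpen {g : G | act g v = v})
    (hstab : ∀ (k : ℕ) (σ : X.osimp k),
      IsCompact {g : G | X.gAct act hact g σ = σ} ∧ IsOpen {g : G | X.gAct act hact g σ = σ})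
    (l k : ℕ) (hlk : l < k)
    (f : X.osimp l → X.osimp k → ℝ)
    (hinv : ∀ (g : G) (τ : X.osimp l) (σ : X.osimp k),
      f (X.gAct act hact g τ) (X.gAct act hact g σ) = f τ σ)
    (Rk : Finset (X.osimp k)) (hRk : X.IsOrbitReps act hact Rk)
    (Rl : Finset (X.osimp l)) (hRl : X.IsOrbitReps act hact Rl) :
    ∑ σ ∈ Rk, ∑' τ : {τ : X.osimp l // X.OSub τ σ},
        f τ.1 σ / (μ {g : G | X.gAct act hact g σ = σ}).toReal =
      ∑ τ ∈ Rl, ∑' σ : {σ : X.osimp k // X.OSub τ σ},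
        f τ σ.1 / (μ {g : G | X.gAct act hact g τ = τ}).toReal :=
  double_counting_haar_general X hlf μ act hact hstab l k f hinv Rk hRk Rl hRl
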